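/- arXiv:math/0210304 — 5 statements merged into one kernel-verified Lean document; each statement's English description precedes it below -/
import Mathlib

section
/- Let H be a complex Hilbert space and let (v_i)_{i∈I} and (w_i)_{i∈I} be families of bounded operators on H with finite row norm and finite column norm respectively. Suppose that for every bounded operator a on H and all vectors ξ, η ∈ H one has Σ_{i∈I} ⟨v_i a w_i ξ, η⟩ = 0 (the sum converging absolutely). Then for every bounded linear functional F on B(H), the sum Σ_{i∈I} F(v_i) w_i converges unconditionally in operator norm and equals 0. -/
local notation "⟪" x ", " y "⟫" => @inner ℂ _ _ x y

/-!
Both families satisfy an ℓ² synthesis bound: `‖∑ cᵢ wᵢ‖ ≤ ‖c‖₂ √Cw` by Cauchy–Schwarz, and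
likewise for `vᵢ` after taking adjoints. Hence `(f vᵢ)` is square-summable, `∑ f(vᵢ) wᵢ`
converges in norm, and it suffices to show `∑ f(vᵢ) ⟪η, wᵢ ξ⟫ = 0`. The coefficients
`⟪η, wᵢ ξ⟫` are square-summable too, so `∑ ⟪η, wᵢ ξ⟫ vᵢ` converges in norm; testing the
hypothesis on the rank-one operator `a = ⟪η, ·⟫ ζ` shows that this sum is `0`, and applying `f`
gives the claim.
-/

open ContinuousLinearMap RCLike
open scoped InnerProductSpace InnerProduct ComplexConjugate

section

variable {𝕜 E : Type*} [RCLike 𝕜] [NormedAddCommGroup E] [NormedSpace 𝕜 E] {I : Type*}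

variable (𝕜) in
/-- The synthesis map `c ↦ ∑ cᵢ gᵢ` is bounded from `ℓ²(I)` to `E` with norm at most `K`. -/
def SynthesisBounded (g : I → E) (K : ℝ) : Prop :=
  ∀ (c : I → 𝕜) (s : Finset I), ‖∑ i ∈ s, c i • g i‖ ≤ √(∑ i ∈ s, ‖c i‖ ^ 2) * K

namespace SynthesisBounded

variable {g : I → E} {K : ℝ}

theorem summable [CompleteSpace E] (hg : SynthesisBounded 𝕜 g K) {c : I → 𝕜}
    (hc : Summable fun i => ‖c i‖ ^ 2) : Summable fun i => c i • g i := by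
  refine summable_iff_vanishing_norm.2 fun ε hε => ?_
  have hK : 0 < |K| + 1 := by positivity
  obtain ⟨s, hs⟩ := summable_iff_vanishing_norm.1 hc ((ε / (|K| + 1)) ^ 2) (by positivity)
  refine ⟨s, fun t ht => ?_⟩
  have hsmall : √(∑ i ∈ t, ‖c i‖ ^ 2) < ε / (|K| + 1) :=
    (Real.sqrt_lt' (by positivity)).2 ((le_abs_self _).trans_lt (hs t ht))
  calc ‖∑ i ∈ t, c i • g i‖ ≤ √(∑ i ∈ t, ‖c i‖ ^ 2) * K := hg c t
    _ ≤ √(∑ i ∈ t, ‖c i‖ ^ 2) * (|K| + 1) := by gcongr; linarith [le_abs_self K]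
    _ < ε / (|K| + 1) * (|K| + 1) := by gcongr
    _ = ε := div_mul_cancel₀ _ hK.ne'

theorem summable_sq_norm_apply (hg : SynthesisBounded 𝕜 g K) (f : E →L[𝕜] 𝕜) :
    Summable fun i => ‖f (g i)‖ ^ 2 := by
  refine summable_of_sum_le (c := (‖f‖ * K) ^ 2) (fun i => by positivity) fun s => ?_
  set t := ∑ i ∈ s, ‖f (g i)‖ ^ 2
  have ht : t ≤ ‖f‖ * K * √t := by
    have hft : f (∑ i ∈ s, conj (f (g i)) • g i) = t := by simp [map_sum, RCLike.conj_mul, t]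
    calc t = ‖f (∑ i ∈ s, conj (f (g i)) • g i)‖ := by
          rw [hft, RCLike.norm_of_nonneg (by positivity)]
      _ ≤ ‖f‖ * ‖∑ i ∈ s, conj (f (g i)) • g i‖ := f.le_opNorm _
      _ ≤ ‖f‖ * (√t * K) := by gcongr; simpa [t] using hg (fun i => conj (f (g i))) s
      _ = ‖f‖ * K * √t := by ring
  nlinarith [sq_nonneg (‖f‖ * K - √t), Real.sq_sqrt (show 0 ≤ t by positivity)]

end SynthesisBounded

end

section Adjoint

variable {𝕜 E F : Type*} [RCLike 𝕜] [NormedAddCommGroup E] [InnerProductSpace 𝕜 E]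
  [CompleteSpace E] [NormedAddCommGroup F] [InnerProductSpace 𝕜 F] [CompleteSpace F] {I : Type*}

theorem sum_sq_norm_apply_le (u : I → E →L[𝕜] F) (s : Finset I) (x : E) :
    ∑ i ∈ s, ‖u i x‖ ^ 2 ≤ ‖∑ i ∈ s, (u i)† ∘L u i‖ * ‖x‖ ^ 2 :=
  calc ∑ i ∈ s, ‖u i x‖ ^ 2 = re ⟪(∑ i ∈ s, (u i)† ∘L u i) x, x⟫_𝕜 := by
        simp [apply_norm_sq_eq_inner_adjoint_left, sum_apply, sum_inner]
    _ ≤ ‖(∑ i ∈ s, (u i)† ∘L u i) x‖ * ‖x‖ := re_inner_le_norm _ _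
    _ ≤ ‖∑ i ∈ s, (u i)† ∘L u i‖ * ‖x‖ * ‖x‖ := by gcongr; exact le_opNorm _ _
    _ = ‖∑ i ∈ s, (u i)† ∘L u i‖ * ‖x‖ ^ 2 := by ring

theorem SynthesisBounded.of_column {u : I → E →L[𝕜] F} {C : ℝ}
    (hu : ∀ s : Finset I, ‖∑ i ∈ s, (u i)† ∘L u i‖ ≤ C) : SynthesisBounded 𝕜 u √C := by
  intro c s
  refine opNorm_le_bound _ (by positivity) fun x => ?_
  have hx : √(∑ i ∈ s, ‖u i x‖ ^ 2) ≤ √C * ‖x‖ := by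
    rw [← Real.sqrt_sq (norm_nonneg x), ← Real.sqrt_mul' C (sq_nonneg ‖x‖)]
    exact Real.sqrt_le_sqrt <| (sum_sq_norm_apply_le u s x).trans (by gcongr; exact hu s)
  calc ‖(∑ i ∈ s, c i • u i) x‖ ≤ ∑ i ∈ s, ‖c i‖ * ‖u i x‖ := by
        simpa only [sum_apply, smul_apply, norm_smul] using norm_sum_le s fun i => c i • u i x
    _ ≤ √(∑ i ∈ s, ‖c i‖ ^ 2) * √(∑ i ∈ s, ‖u i x‖ ^ 2) := Real.sum_mul_le_sqrt_mul_sqrt _ _ _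
    _ ≤ √(∑ i ∈ s, ‖c i‖ ^ 2) * √C * ‖x‖ := by rw [mul_assoc]; gcongr

theorem SynthesisBounded.of_row {v : I → E →L[𝕜] F} {C : ℝ}
    (hv : ∀ s : Finset I, ‖∑ i ∈ s, v i ∘L (v i)†‖ ≤ C) : SynthesisBounded 𝕜 v √C := by
  intro c s
  have hcol : SynthesisBounded 𝕜 (fun i => (v i)†) √C :=
    .of_column (by simpa only [adjoint_adjoint] using hv)
  calc ‖∑ i ∈ s, c i • v i‖ = ‖∑ i ∈ s, conj (c i) • (v i)†‖ := by
        rw [← LinearIsometryEquiv.norm_map adjoint]; simp [map_sum, map_smulₛₗ]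
    _ ≤ √(∑ i ∈ s, ‖conj (c i)‖ ^ 2) * √C := hcol _ s
    _ = √(∑ i ∈ s, ‖c i‖ ^ 2) * √C := by simp

end Adjoint

section Inner

variable {𝕜 E F : Type*} [RCLike 𝕜] [NormedAddCommGroup E] [NormedSpace 𝕜 E]
  [NormedAddCommGroup F] [InnerProductSpace 𝕜 F] {I : Type*}

theorem eq_zero_of_hasSum_of_hasSum_inner {g : I → E →L[𝕜] F} {S : E →L[𝕜] F} (hS : HasSum g S)
    (h : ∀ x y, HasSum (fun i => ⟪y, g i x⟫_𝕜) 0) : S = 0 := by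
  ext x
  refine ext_inner_left 𝕜 fun y => ?_
  simpa using (hS.mapL ((innerSL 𝕜 y).comp (apply 𝕜 F x))).unique (h x y)

variable {G V : Type*} [NormedAddCommGroup G] [NormedSpace 𝕜 G]
  [NormedAddCommGroup V] [InnerProductSpace 𝕜 V]

theorem hasSum_inner_mul_inner_of_hasSum_sandwich {v : I → G →L[𝕜] V} {w : I → E →L[𝕜] F}
    (h : ∀ (a : F →L[𝕜] G) x y, HasSum (fun i => ⟪v i (a (w i x)), y⟫_𝕜) 0)
    (x : E) (y : F) (z : G) (t : V) : HasSum (fun i => ⟪y, w i x⟫_𝕜 * ⟪t, v i z⟫_𝕜) 0 := by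
  rw [← RCLike.hasSum_conj']
  simpa [inner_smul_left, mul_comm] using h ((innerSL 𝕜 y).smulRight z) x t

end Inner

/-- Let `(v i)` and `(w i)` be families of bounded operators on a complex
Hilbert space `H` with finite row norm and finite column norm respectively.  If for every
bounded operator `a` and all vectors `ξ, η` the sum `∑ᵢ ⟨vᵢ a wᵢ ξ, η⟩` converges absolutely
to `0`, then for every bounded linear functional `f` on `B(H)` the sum `∑ᵢ f(vᵢ) wᵢ`
converges unconditionally in operator norm to `0`. -/
theorem slice_sum_zero
    {H : Type*} [NormedAddCommGroup H] [InnerProductSpace ℂ H] [CompleteSpace H]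
    {I : Type*} (v w : I → H →L[ℂ] H) (Cv Cw : ℝ)
    (hv : ∀ F : Finset I,
      ‖∑ i ∈ F, (v i) ∘L (ContinuousLinearMap.adjoint (v i))‖ ≤ Cv)
    (hw : ∀ F : Finset I,
      ‖∑ i ∈ F, (ContinuousLinearMap.adjoint (w i)) ∘L (w i)‖ ≤ Cw)
    (h0 : ∀ (a : H →L[ℂ] H) (ξ η : H),
      Summable (fun i => ‖⟪(v i) (a ((w i) ξ)), η⟫‖) ∧
      HasSum (fun i => ⟪(v i) (a ((w i) ξ)), η⟫) 0)
    (f : (H →L[ℂ] H) →L[ℂ] ℂ) :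
    HasSum (fun i => f (v i) • w i) 0 := by
  have hv' : SynthesisBounded ℂ v √Cv := .of_row hv
  have hw' : SynthesisBounded ℂ w √Cw := .of_column hw
  have hslice : ∀ ξ η : H, HasSum (fun i => f (v i) * ⟪η, w i ξ⟫) 0 := by
    intro ξ η
    obtain ⟨T, hT⟩ :=
      hv'.summable (hw'.summable_sq_norm_apply ((innerSL ℂ η).comp (apply ℂ H ξ)))
    have hT0 : T = 0 := eq_zero_of_hasSum_of_hasSum_inner hT fun ζ μ => by
      simpa [inner_smul_right] using
        hasSum_inner_mul_inner_of_hasSum_sandwich (fun a x y => (h0 a x y).2) ξ η ζ μ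
    simpa [hT0, mul_comm] using hT.mapL f
  obtain ⟨S, hS⟩ := hw'.summable (hv'.summable_sq_norm_apply f)
  rwa [eq_zero_of_hasSum_of_hasSum_inner hS fun ξ η => by
    simpa [inner_smul_right] using hslice ξ η] at hS
end

section
/- Let H be a complex Hilbert space and let (v_i)_{i∈I} and (w_i)_{i∈I} be families of bounded operators on H with row norm at most C and column norm at most D. Then for every bounded operator a on H and all ξ, η ∈ H, the sum Σ_{i∈I} ⟨v_i a w_i ξ, η⟩ converges absolutely and defines a bounded sesquilinear form; hence there is a unique bounded operator T(a) on H with ⟨T(a)ξ, η⟩ = Σ_{i∈I} ⟨v_i a w_i ξ, η⟩, and the map a ↦ T(a) is a bounded linear operator on B(H) of norm at most C·D. -/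
local notation "⟪" x ", " y "⟫" => @inner ℂ _ _ x y

open ContinuousLinearMap

private lemma col_bound {H : Type*} [NormedAddCommGroup H] [InnerProductSpace ℂ H]
    [CompleteSpace H] {I : Type*} (w : I → H →L[ℂ] H) (D : ℝ)
    (hw : ∀ F : Finset I, ‖∑ i ∈ F, (adjoint (w i)) ∘L (w i)‖ ≤ D ^ 2)
    (ξ : H) (F : Finset I) : ∑ i ∈ F, ‖w i ξ‖ ^ 2 ≤ D ^ 2 * ‖ξ‖ ^ 2 := by
  have h1 : (∑ i ∈ F, ‖w i ξ‖ ^ 2 : ℝ)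
      = RCLike.re ⟪(∑ i ∈ F, (adjoint (w i)) ∘L (w i)) ξ, ξ⟫ := by
    rw [ContinuousLinearMap.sum_apply, sum_inner, map_sum]
    refine Finset.sum_congr rfl fun i _ => ?_
    rw [ContinuousLinearMap.comp_apply, ContinuousLinearMap.adjoint_inner_left,
      inner_self_eq_norm_sq]
  rw [h1]
  calc RCLike.re ⟪(∑ i ∈ F, (adjoint (w i)) ∘L (w i)) ξ, ξ⟫
      ≤ ‖⟪(∑ i ∈ F, (adjoint (w i)) ∘L (w i)) ξ, ξ⟫‖ := RCLike.re_le_norm _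
    _ ≤ ‖(∑ i ∈ F, (adjoint (w i)) ∘L (w i)) ξ‖ * ‖ξ‖ := norm_inner_le_norm _ _
    _ ≤ D ^ 2 * ‖ξ‖ ^ 2 := by
        have h1 := le_opNorm (∑ i ∈ F, (adjoint (w i)) ∘L (w i)) ξ
        have h2 := hw F
        have h3 : (0:ℝ) ≤ ‖ξ‖ := norm_nonneg _
        have h4 : (0:ℝ) ≤ ‖(∑ i ∈ F, (adjoint (w i)) ∘L (w i)) ξ‖ := norm_nonneg _
        nlinarith

private lemma row_bound {H : Type*} [NormedAddCommGroup H] [InnerProductSpace ℂ H]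
    [CompleteSpace H] {I : Type*} (v : I → H →L[ℂ] H) (C : ℝ)
    (hv : ∀ F : Finset I, ‖∑ i ∈ F, (v i) ∘L (adjoint (v i))‖ ≤ C ^ 2)
    (η : H) (F : Finset I) : ∑ i ∈ F, ‖adjoint (v i) η‖ ^ 2 ≤ C ^ 2 * ‖η‖ ^ 2 := by
  have key : ∀ i : I, (v i) ∘L (adjoint (v i))
      = (adjoint (adjoint (v i))) ∘L (adjoint (v i)) := by
    intro i; rw [adjoint_adjoint]
  have := col_bound (fun i => adjoint (v i)) C (fun F => by
    simpa only [← key] using hv F) η F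
  simpa using this

private lemma key_bound {H : Type*} [NormedAddCommGroup H] [InnerProductSpace ℂ H]
    [CompleteSpace H] {I : Type*} (v w : I → H →L[ℂ] H) (C D : ℝ) (hC : 0 ≤ C) (hD : 0 ≤ D)
    (hv : ∀ F : Finset I, ‖∑ i ∈ F, (v i) ∘L (adjoint (v i))‖ ≤ C ^ 2)
    (hw : ∀ F : Finset I, ‖∑ i ∈ F, (adjoint (w i)) ∘L (w i)‖ ≤ D ^ 2)
    (a : H →L[ℂ] H) (ξ η : H) (F : Finset I) :
    ∑ i ∈ F, ‖⟪(v i) (a ((w i) ξ)), η⟫‖ ≤ C * D * ‖a‖ * ‖ξ‖ * ‖η‖ := by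
  have step1 : ∑ i ∈ F, ‖⟪(v i) (a ((w i) ξ)), η⟫‖
      ≤ ∑ i ∈ F, ‖a ((w i) ξ)‖ * ‖adjoint (v i) η‖ := by
    refine Finset.sum_le_sum fun i _ => ?_
    rw [← ContinuousLinearMap.adjoint_inner_right]
    exact norm_inner_le_norm _ _
  have cs := Finset.sum_mul_sq_le_sq_mul_sq F (fun i => ‖a ((w i) ξ)‖)
      (fun i => ‖adjoint (v i) η‖)
  have hA : ∑ i ∈ F, ‖a ((w i) ξ)‖ ^ 2 ≤ ‖a‖ ^ 2 * (D ^ 2 * ‖ξ‖ ^ 2) := by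
    calc ∑ i ∈ F, ‖a ((w i) ξ)‖ ^ 2 ≤ ∑ i ∈ F, ‖a‖ ^ 2 * ‖(w i) ξ‖ ^ 2 := by
          refine Finset.sum_le_sum fun i _ => ?_
          have := le_opNorm a ((w i) ξ)
          have h0 : (0:ℝ) ≤ ‖a ((w i) ξ)‖ := norm_nonneg _
          nlinarith [norm_nonneg ((w i) ξ), opNorm_nonneg a]
      _ = ‖a‖ ^ 2 * ∑ i ∈ F, ‖(w i) ξ‖ ^ 2 := by rw [Finset.mul_sum]
      _ ≤ ‖a‖ ^ 2 * (D ^ 2 * ‖ξ‖ ^ 2) := by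
          have := col_bound w D hw ξ F
          have := opNorm_nonneg a
          nlinarith
  have hB : ∑ i ∈ F, ‖adjoint (v i) η‖ ^ 2 ≤ C ^ 2 * ‖η‖ ^ 2 := row_bound v C hv η F
  have hs0 : (0:ℝ) ≤ ∑ i ∈ F, ‖a ((w i) ξ)‖ * ‖adjoint (v i) η‖ :=
    Finset.sum_nonneg fun i _ => mul_nonneg (norm_nonneg _) (norm_nonneg _)
  have hA0 : (0:ℝ) ≤ ∑ i ∈ F, ‖a ((w i) ξ)‖ ^ 2 :=
    Finset.sum_nonneg fun i _ => sq_nonneg _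
  have hB0 : (0:ℝ) ≤ ∑ i ∈ F, ‖adjoint (v i) η‖ ^ 2 :=
    Finset.sum_nonneg fun i _ => sq_nonneg _
  have hr0 : (0:ℝ) ≤ C * D * ‖a‖ * ‖ξ‖ * ‖η‖ := by positivity
  refine step1.trans ?_
  nlinarith [norm_nonneg a, norm_nonneg ξ, norm_nonneg η, mul_nonneg hC hD,
    sq_nonneg (C * D * ‖a‖ * ‖ξ‖ * ‖η‖)]

/-- Let `(v i)` and `(w i)` be families of bounded operators on a complex
Hilbert space `H` with row norm at most `C` and column norm at most `D`.  Then for every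
bounded operator `a` and all `ξ, η` the sum `∑ᵢ ⟨vᵢ a wᵢ ξ, η⟩` converges absolutely;
there is a (unique) bounded operator `T a` with `⟨T a ξ, η⟩ = ∑ᵢ ⟨vᵢ a wᵢ ξ, η⟩`, and
`a ↦ T a` is a bounded linear operator on `B(H)` of norm at most `C * D`. -/
theorem elementary_operator_bounded
    {H : Type*} [NormedAddCommGroup H] [InnerProductSpace ℂ H] [CompleteSpace H]
    {I : Type*} (v w : I → H →L[ℂ] H) (C D : ℝ) (hC : 0 ≤ C) (hD : 0 ≤ D)
    (hv : ∀ F : Finset I,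
      ‖∑ i ∈ F, (v i) ∘L (ContinuousLinearMap.adjoint (v i))‖ ≤ C ^ 2)
    (hw : ∀ F : Finset I,
      ‖∑ i ∈ F, (ContinuousLinearMap.adjoint (w i)) ∘L (w i)‖ ≤ D ^ 2) :
    (∀ (a : H →L[ℂ] H) (ξ η : H),
        Summable fun i => ‖⟪(v i) (a ((w i) ξ)), η⟫‖) ∧
    ∃ T : (H →L[ℂ] H) →L[ℂ] (H →L[ℂ] H),
      ‖T‖ ≤ C * D ∧
      (∀ (a : H →L[ℂ] H) (ξ η : H),
        HasSum (fun i => ⟪(v i) (a ((w i) ξ)), η⟫) ⟪(T a) ξ, η⟫) ∧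
      (∀ (a : H →L[ℂ] H) (S : H →L[ℂ] H),
        (∀ ξ η : H, HasSum (fun i => ⟪(v i) (a ((w i) ξ)), η⟫) ⟪S ξ, η⟫) →
        S = T a) := by

  have hsummable : ∀ (a : H →L[ℂ] H) (ξ η : H),
      Summable fun i => ‖⟪(v i) (a ((w i) ξ)), η⟫‖ := fun a ξ η =>
    summable_of_sum_le (fun i => norm_nonneg _)
      (fun F => key_bound v w C D hC hD hv hw a ξ η F)
  have hsum : ∀ (a : H →L[ℂ] H) (ξ η : H),
      Summable fun i => ⟪(v i) (a ((w i) ξ)), η⟫ := fun a ξ η =>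
    (hsummable a ξ η).of_norm
  have htsum_bound : ∀ (a : H →L[ℂ] H) (ξ η : H),
      ‖∑' i, ⟪(v i) (a ((w i) ξ)), η⟫‖ ≤ C * D * ‖a‖ * ‖ξ‖ * ‖η‖ := fun a ξ η =>
    (norm_tsum_le_tsum_norm (hsummable a ξ η)).trans
      (Summable.tsum_le_of_sum_le (hsummable a ξ η) (key_bound v w C D hC hD hv hw a ξ η))
  -- the bounded functional η ↦ ∑' i, ⟪v i (a (w i ξ)), η⟫
  set φ : (H →L[ℂ] H) → H → (H →L[ℂ] ℂ) := fun a ξ =>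
    LinearMap.mkContinuous
      { toFun := fun η => ∑' i, ⟪(v i) (a ((w i) ξ)), η⟫
        map_add' := fun η η' => by
          simp_rw [inner_add_right]
          exact Summable.tsum_add (hsum a ξ η) (hsum a ξ η')
        map_smul' := fun c η => by
          simp_rw [inner_smul_right, RingHom.id_apply]
          exact tsum_mul_left }
      (C * D * ‖a‖ * ‖ξ‖)
      (fun η => by simpa using htsum_bound a ξ η) with hφ
  have hφ_apply : ∀ a ξ η, φ a ξ η = ∑' i, ⟪(v i) (a ((w i) ξ)), η⟫ := fun a ξ η => rfl
  set z : (H →L[ℂ] H) → H → H := fun a ξ => (InnerProductSpace.toDual ℂ H).symm (φ a ξ)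
    with hz
  have hz_inner : ∀ a ξ η, ⟪z a ξ, η⟫ = ∑' i, ⟪(v i) (a ((w i) ξ)), η⟫ := fun a ξ η => by
    rw [hz]; exact InnerProductSpace.toDual_symm_apply
  have hz_norm : ∀ a ξ, ‖z a ξ‖ ≤ C * D * ‖a‖ * ‖ξ‖ := fun a ξ => by
    rw [hz]
    simp only [LinearIsometryEquiv.norm_map]
    exact LinearMap.mkContinuous_norm_le _ (by positivity) _
  -- T₀ a : the operator
  set T₀ : (H →L[ℂ] H) → (H →L[ℂ] H) := fun a =>
    LinearMap.mkContinuous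
      { toFun := z a
        map_add' := fun ξ ξ' => by
          refine ext_inner_right ℂ fun η => ?_
          rw [inner_add_left, hz_inner, hz_inner, hz_inner]
          simp_rw [map_add, inner_add_left]
          exact Summable.tsum_add (hsum a ξ η) (hsum a ξ' η)
        map_smul' := fun c ξ => by
          refine ext_inner_right ℂ fun η => ?_
          rw [RingHom.id_apply, inner_smul_left, hz_inner, hz_inner]
          simp_rw [map_smul, inner_smul_left]
          exact tsum_mul_left }
      (C * D * ‖a‖)
      (fun ξ => by simpa [mul_assoc] using hz_norm a ξ) with hT₀
  have hT₀_apply : ∀ a ξ, T₀ a ξ = z a ξ := fun a ξ => rfl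
  have hT₀_inner : ∀ a ξ η, ⟪T₀ a ξ, η⟫ = ∑' i, ⟪(v i) (a ((w i) ξ)), η⟫ :=
    fun a ξ η => hz_inner a ξ η
  have hT₀_norm : ∀ a, ‖T₀ a‖ ≤ C * D * ‖a‖ := fun a =>
    LinearMap.mkContinuous_norm_le _ (by positivity) _
  set T : (H →L[ℂ] H) →L[ℂ] (H →L[ℂ] H) :=
    LinearMap.mkContinuous
      { toFun := T₀
        map_add' := fun a b => by
          refine ContinuousLinearMap.ext fun ξ => ?_
          refine ext_inner_right ℂ fun η => ?_
          rw [ContinuousLinearMap.add_apply, inner_add_left, hT₀_inner, hT₀_inner, hT₀_inner]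
          simp_rw [ContinuousLinearMap.add_apply, map_add, inner_add_left]
          exact Summable.tsum_add (hsum a ξ η) (hsum b ξ η)
        map_smul' := fun c a => by
          refine ContinuousLinearMap.ext fun ξ => ?_
          refine ext_inner_right ℂ fun η => ?_
          rw [RingHom.id_apply, ContinuousLinearMap.smul_apply, inner_smul_left,
            hT₀_inner, hT₀_inner]
          simp_rw [ContinuousLinearMap.smul_apply, map_smul, inner_smul_left]
          exact tsum_mul_left }
      (C * D)
      (fun a => by simpa [mul_assoc] using hT₀_norm a) with hT
  have hT_apply : ∀ a, T a = T₀ a := fun a => rfl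
  refine ⟨hsummable, T, ?_, ?_, ?_⟩
  · exact LinearMap.mkContinuous_norm_le _ (mul_nonneg hC hD) _
  · intro a ξ η
    have := (hsum a ξ η).hasSum
    rwa [hT_apply, hT₀_inner]
  · intro a S hS
    refine ContinuousLinearMap.ext fun ξ => ?_
    refine ext_inner_right ℂ fun η => ?_
    have h1 := (hS ξ η).tsum_eq
    rw [hT_apply, hT₀_inner, ← h1]
end

section
/- Let I be a set, u : I×I → ℂ, and C ≥ 0. Then u is a Schur multiplier of norm at most C if and only if for every finite subset F of I, the restriction of u to F×F is a Schur multiplier on ℓ²(F) of norm at most C. -/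
universe u

local notation "⟪" x ", " y "⟫" => @inner ℂ _ _ x y

/-- The standard orthonormal basis vector `δ i` of `ℓ²(I)`. -/
noncomputable def schurDelta {I : Type u} (i : I) : lp (fun _ : I => ℂ) 2 :=
  haveI := Classical.decEq I
  lp.single 2 i (1 : ℂ)

/-- `u : I × I → ℂ` is a Schur multiplier of norm at most `C`: for every bounded operator
`a` on `ℓ²(I)` there is a bounded operator `b` with matrix entries
`⟨b δⱼ, δᵢ⟩ = u(i,j)·⟨a δⱼ, δᵢ⟩` and `‖b‖ ≤ C‖a‖`. -/
def IsSchurMul {I : Type u} (u : I × I → ℂ) (C : ℝ) : Prop :=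
  ∀ a : lp (fun _ : I => ℂ) 2 →L[ℂ] lp (fun _ : I => ℂ) 2,
    ∃ b : lp (fun _ : I => ℂ) 2 →L[ℂ] lp (fun _ : I => ℂ) 2,
      ‖b‖ ≤ C * ‖a‖ ∧
      ∀ i j : I,
        ⟪schurDelta i, b (schurDelta j)⟫ = u (i, j) * ⟪schurDelta i, a (schurDelta j)⟫

/-- The Schur multiplier norm of `u`: the least `C ≥ 0` such that `u` is a Schur
multiplier of norm at most `C`. -/
noncomputable def schurNorm {I : Type u} (u : I × I → ℂ) : ℝ :=
  sInf {C : ℝ | 0 ≤ C ∧ IsSchurMul u C}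

/-!
Let `V_F : ℓ²(F) → ℓ²(I)` be the isometric inclusion, so that `V_F† T V_F` has the `F × F`
entries of `T` and `V_F S V_F†` has the entries of `S` on `F × F` and zeros elsewhere.
Restriction: multiply `V_F a V_F†` by `u` and compress the result with `V_F† · V_F`.
Extension: for `a` on `ℓ²(I)` the operators `V_F b_F V_F†`, where `b_F` is the multiplied
compression `V_F† a V_F`, have norm at most `C‖a‖` and the required `(i, j)` entry once
`i, j ∈ F`. Norm-bounded families of operators have limits along ultrafilters in the weak
operator topology (closed balls of `ℂ` are compact, and a bounded sesquilinear form is given by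
an operator), so the limit along an ultrafilter finer than `atTop` is the Schur product.
-/

open Filter Topology ContinuousLinearMap
open scoped InnerProductSpace InnerProduct

theorem ContinuousLinearMap.norm_comp_comp_le_of_norm_le_one {𝕜 E F G H : Type*}
    [NontriviallyNormedField 𝕜] [SeminormedAddCommGroup E] [SeminormedAddCommGroup F]
    [SeminormedAddCommGroup G] [SeminormedAddCommGroup H] [NormedSpace 𝕜 E] [NormedSpace 𝕜 F]
    [NormedSpace 𝕜 G] [NormedSpace 𝕜 H]
    (A : G →L[𝕜] H) (T : F →L[𝕜] G) (B : E →L[𝕜] F) (hA : ‖A‖ ≤ 1) (hB : ‖B‖ ≤ 1) :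
    ‖A ∘L T ∘L B‖ ≤ ‖T‖ :=
  calc ‖A ∘L T ∘L B‖ ≤ ‖A‖ * (‖T‖ * ‖B‖) :=
        (opNorm_comp_le _ _).trans (by gcongr; exact opNorm_comp_le _ _)
    _ ≤ 1 * (‖T‖ * 1) := by gcongr
    _ = ‖T‖ := by ring

section

variable {𝕜 E : Type*} [RCLike 𝕜] [NormedAddCommGroup E] [InnerProductSpace 𝕜 E] [CompleteSpace E]

theorem InnerProductSpace.norm_continuousLinearMapOfBilin_le (B : E →L⋆[𝕜] E →L[𝕜] 𝕜) :
    ‖continuousLinearMapOfBilin B‖ ≤ ‖B‖ :=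
  opNorm_le_bound _ (norm_nonneg B) fun v => by
    simpa [continuousLinearMapOfBilin] using B.le_opNorm v

theorem ContinuousLinearMap.exists_tendsto_inner_of_norm_le {ι : Type*} (l : Ultrafilter ι)
    (T : ι → E →L[𝕜] E) {M : ℝ} (hT : ∀ k, ‖T k‖ ≤ M) :
    ∃ S : E →L[𝕜] E, ‖S‖ ≤ M ∧ ∀ x y, Tendsto (fun k => ⟪x, T k y⟫_𝕜) l (𝓝 ⟪x, S y⟫_𝕜) := by
  have hM : 0 ≤ M := have ⟨k⟩ := l.neBot.nonempty; (norm_nonneg _).trans (hT k)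
  have hlim (x y : E) :
      ∃ z : 𝕜, ‖z‖ ≤ M * ‖x‖ * ‖y‖ ∧ Tendsto (fun k => ⟪x, T k y⟫_𝕜) l (𝓝 z) := by
    have hball (k : ι) : ⟪x, T k y⟫_𝕜 ∈ Metric.closedBall 0 (M * ‖x‖ * ‖y‖) := by
      rw [mem_closedBall_zero_iff]
      calc ‖⟪x, T k y⟫_𝕜‖ ≤ ‖x‖ * ‖T k y‖ := norm_inner_le_norm _ _
        _ ≤ ‖x‖ * (M * ‖y‖) := by gcongr; exact (T k).le_of_opNorm_le (hT k) y
        _ = M * ‖x‖ * ‖y‖ := by ring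
    obtain ⟨z, hz, hlz⟩ := (isCompact_closedBall (0 : 𝕜) _).ultrafilter_le_nhds
      (l.map fun k => ⟪x, T k y⟫_𝕜) (le_principal_iff.2 <| univ_mem' (f := (l : Filter ι)) hball)
    exact ⟨z, mem_closedBall_zero_iff.1 hz, hlz⟩
  choose L hLM hL using hlim
  have lim_unique {x y : E} {z : 𝕜} (h : Tendsto (fun k => ⟪x, T k y⟫_𝕜) l (𝓝 z)) :
      L x y = z :=
    tendsto_nhds_unique (hL x y) h
  let B : E →L⋆[𝕜] E →L[𝕜] 𝕜 := LinearMap.mkContinuous₂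
    (LinearMap.mk₂'ₛₗ (starRingEnd 𝕜) (RingHom.id 𝕜) L
      (fun x x' y => lim_unique <| by simpa [inner_add_left] using (hL x y).add (hL x' y))
      (fun c x y => lim_unique <| by simpa [inner_smul_left] using (hL x y).const_mul _)
      (fun x y y' => lim_unique <| by simpa [inner_add_right] using (hL x y).add (hL x y'))
      (fun c x y => lim_unique <| by simpa [inner_smul_right] using (hL x y).const_mul c))
    M hLM
  refine ⟨(InnerProductSpace.continuousLinearMapOfBilin B)†, ?_, fun x y => ?_⟩
  · rw [LinearIsometryEquiv.norm_map]
    exact (InnerProductSpace.norm_continuousLinearMapOfBilin_le B).trans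
      (LinearMap.mkContinuous₂_norm_le _ hM _)
  · rw [adjoint_inner_right, InnerProductSpace.continuousLinearMapOfBilin_apply]
    exact hL x y

variable {E' : Type*} [NormedAddCommGroup E'] [InnerProductSpace 𝕜 E'] [CompleteSpace E']

namespace LinearIsometry

variable (V : E →ₗᵢ[𝕜] E')

theorem norm_adjoint_toContinuousLinearMap_le : ‖V.toContinuousLinearMap†‖ ≤ 1 :=
  (LinearIsometryEquiv.norm_map _ _).trans_le V.norm_toContinuousLinearMap_le

theorem norm_adjoint_comp_comp_le (T : E' →L[𝕜] E') :
    ‖V.toContinuousLinearMap† ∘L T ∘L V.toContinuousLinearMap‖ ≤ ‖T‖ :=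
  norm_comp_comp_le_of_norm_le_one _ _ _ V.norm_adjoint_toContinuousLinearMap_le
    V.norm_toContinuousLinearMap_le

theorem norm_comp_comp_adjoint_le (S : E →L[𝕜] E) :
    ‖V.toContinuousLinearMap ∘L S ∘L V.toContinuousLinearMap†‖ ≤ ‖S‖ :=
  norm_comp_comp_le_of_norm_le_one _ _ _ V.norm_toContinuousLinearMap_le
    V.norm_adjoint_toContinuousLinearMap_le

theorem inner_adjoint_comp_comp_apply (T : E' →L[𝕜] E') (x y : E) :
    ⟪x, (V.toContinuousLinearMap† ∘L T ∘L V.toContinuousLinearMap) y⟫_𝕜 = ⟪V x, T (V y)⟫_𝕜 := by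
  rw [comp_apply, comp_apply, adjoint_inner_right]
  rfl

theorem inner_comp_comp_adjoint_apply (S : E →L[𝕜] E) (x y : E) :
    ⟪V x, (V.toContinuousLinearMap ∘L S ∘L V.toContinuousLinearMap†) (V y)⟫_𝕜 =
      ⟪x, S y⟫_𝕜 := by
  have h := congr($(V.adjoint_comp_self) y)
  simp only [comp_apply, coe_toContinuousLinearMap] at h ⊢
  rw [h, one_apply_eq_self, V.inner_map_map]

end LinearIsometry

end

theorem orthonormal_schurDelta (I : Type*) :
    Orthonormal ℂ (schurDelta : I → lp (fun _ : I => ℂ) 2) := by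
  classical
  rw [orthonormal_iff_ite]
  intro i j
  simp [schurDelta, lp.inner_single_left, lp.single_apply, Pi.single_apply]

noncomputable def lpInclusion {J I : Type*} (e : J → I) (he : Function.Injective e) :
    lp (fun _ : J => ℂ) 2 →ₗᵢ[ℂ] lp (fun _ : I => ℂ) 2 :=
  ((orthonormal_schurDelta I).comp e he).orthogonalFamily.linearIsometry

section lpInclusion

variable {J I : Type*} (e : J → I) (he : Function.Injective e)

theorem lpInclusion_schurDelta (j : J) : lpInclusion e he (schurDelta j) = schurDelta (e j) := by
  classical
  conv_lhs => rw [schurDelta]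
  simp [lpInclusion, OrthogonalFamily.linearIsometry_apply_single]

theorem inner_schurDelta_adjoint_comp_comp
    (T : lp (fun _ : I => ℂ) 2 →L[ℂ] lp (fun _ : I => ℂ) 2) (k l : J) :
    ⟪schurDelta k, ((lpInclusion e he).toContinuousLinearMap† ∘L T ∘L
      (lpInclusion e he).toContinuousLinearMap) (schurDelta l)⟫ =
      ⟪schurDelta (e k), T (schurDelta (e l))⟫ := by
  rw [LinearIsometry.inner_adjoint_comp_comp_apply, lpInclusion_schurDelta, lpInclusion_schurDelta]

theorem inner_schurDelta_comp_comp_adjoint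
    (S : lp (fun _ : J => ℂ) 2 →L[ℂ] lp (fun _ : J => ℂ) 2) (k l : J) :
    ⟪schurDelta (e k), ((lpInclusion e he).toContinuousLinearMap ∘L S ∘L
      (lpInclusion e he).toContinuousLinearMap†) (schurDelta (e l))⟫ =
      ⟪schurDelta k, S (schurDelta l)⟫ := by
  rw [← lpInclusion_schurDelta e he k, ← lpInclusion_schurDelta e he l,
    LinearIsometry.inner_comp_comp_adjoint_apply]

end lpInclusion

theorem IsSchurMul.comp_injective {I J : Type*} {u : I × I → ℂ} {C : ℝ} (h : IsSchurMul u C)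
    (hC : 0 ≤ C) {e : J → I} (he : Function.Injective e) :
    IsSchurMul (fun p : J × J => u (e p.1, e p.2)) C := by
  intro a
  set V := (lpInclusion e he).toContinuousLinearMap
  obtain ⟨b, hb, hbu⟩ := h (V ∘L a ∘L V†)
  refine ⟨V† ∘L b ∘L V, ?_, fun k l => ?_⟩
  · calc ‖V† ∘L b ∘L V‖ ≤ ‖b‖ := LinearIsometry.norm_adjoint_comp_comp_le _ _
      _ ≤ C * ‖V ∘L a ∘L V†‖ := hb
      _ ≤ C * ‖a‖ := by gcongr; exact LinearIsometry.norm_comp_comp_adjoint_le _ _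
  · rw [inner_schurDelta_adjoint_comp_comp, hbu, inner_schurDelta_comp_comp_adjoint]

theorem IsSchurMul.of_forall_finset {I : Type*} {u : I × I → ℂ} {C : ℝ} (hC : 0 ≤ C)
    (h : ∀ F : Finset I,
      IsSchurMul (fun p : {x // x ∈ F} × {x // x ∈ F} => u ((p.1 : I), (p.2 : I))) C) :
    IsSchurMul u C := by
  classical
  intro a
  let V (F : Finset I) := (lpInclusion ((↑) : F → I) Subtype.val_injective).toContinuousLinearMap
  choose b hb hbu using fun F => h F ((V F)† ∘L a ∘L V F)
  obtain ⟨S, hS, hlim⟩ := exists_tendsto_inner_of_norm_le (Ultrafilter.of atTop)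
    (fun F => V F ∘L b F ∘L (V F)†) (M := C * ‖a‖) fun F =>
      calc ‖V F ∘L b F ∘L (V F)†‖ ≤ ‖b F‖ := LinearIsometry.norm_comp_comp_adjoint_le _ _
        _ ≤ C * ‖(V F)† ∘L a ∘L V F‖ := hb F
        _ ≤ C * ‖a‖ := by gcongr; exact LinearIsometry.norm_adjoint_comp_comp_le _ _
  refine ⟨S, hS, fun i j => tendsto_nhds_unique (hlim _ _) (tendsto_const_nhds.congr' ?_)⟩
  refine Ultrafilter.of_le _ (eventually_atTop.2 ⟨{i, j}, fun F hF => ?_⟩)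
  have hentry := inner_schurDelta_comp_comp_adjoint _ Subtype.val_injective (b F)
    ⟨i, hF (by simp)⟩ ⟨j, hF (by simp)⟩
  rw [hbu, inner_schurDelta_adjoint_comp_comp] at hentry
  exact hentry.symm

/-- `u : I × I → ℂ` is a Schur multiplier of norm at most `C` iff for
every finite subset `F` of `I` the restriction of `u` to `F × F` is a Schur multiplier
on `ℓ²(F)` of norm at most `C`. -/
theorem isSchurMul_iff_finite_restrictions {I : Type u} (u : I × I → ℂ) (C : ℝ)
    (hC : 0 ≤ C) :
    IsSchurMul u C ↔
      ∀ F : Finset I,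
        IsSchurMul (fun p : {x // x ∈ F} × {x // x ∈ F} => u ((p.1 : I), (p.2 : I))) C :=
  ⟨fun h _ => h.comp_injective hC Subtype.val_injective, IsSchurMul.of_forall_finset hC⟩
end

section
/- Let G be a topological group, u : G → ℂ a continuous function, H a Hilbert space, and ξ, η : G → H bounded functions with u(st⁻¹) = ⟨ξ(s), η(t)⟩ for all s,t ∈ G. Then there exist bounded weakly continuous functions ξ̃, η̃ : G → H with sup_s ‖ξ̃(s)‖ ≤ sup_s ‖ξ(s)‖, sup_t ‖η̃(t)‖ ≤ sup_t ‖η(t)‖, and u(st⁻¹) = ⟨ξ̃(s), η̃(t)⟩ for all s,t ∈ G. -/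
universe u v

local notation "⟪" x ", " y "⟫" => @inner ℂ _ _ x y

/-
Project `η` onto the closed span `K` of the range of `ξ`: this changes none of the inner
products `⟨η t, ξ s⟩ = u (s t⁻¹)`, does not increase norms, and the projected map is weakly
continuous, because the vectors `ζ` for which `t ↦ ⟨η' t, ζ⟩` is continuous form a closed
subspace (closed by boundedness, via uniform limits) containing every `ξ s` and all of `Kᗮ`.
Then do the same for `ξ` against the new map `η'`.
-/

section WeakContinuity

variable {𝕜 E X : Type*} [RCLike 𝕜] [NormedAddCommGroup E] [InnerProductSpace 𝕜 E]
  [TopologicalSpace X]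

variable (𝕜) in
def weakContinuitySubmodule (f : X → E) : Submodule 𝕜 E where
  carrier := {ζ | Continuous fun x => inner 𝕜 (f x) ζ}
  add_mem' (hζ : Continuous _) (hζ' : Continuous _) :=
    (hζ.add hζ').congr fun _ => (inner_add_right _ _ _).symm
  zero_mem' := continuous_const.congr fun _ => (inner_zero_right _).symm
  smul_mem' _ _ (hζ : Continuous _) :=
    (continuous_const.mul hζ).congr fun _ => (inner_smul_right _ _ _).symm

theorem mem_weakContinuitySubmodule {f : X → E} {ζ : E} :
    ζ ∈ weakContinuitySubmodule 𝕜 f ↔ Continuous fun x => inner 𝕜 (f x) ζ :=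
  Iff.rfl

theorem isClosed_weakContinuitySubmodule {f : X → E} {C : ℝ} (hf : ∀ x, ‖f x‖ ≤ C) :
    IsClosed (weakContinuitySubmodule 𝕜 f : Set E) := by
  suffices Continuous fun ζ : E => UniformFun.ofFun fun x => inner 𝕜 (f x) ζ from
    (UniformFun.isClosed_setOfPred_continuous X).preimage this
  refine continuous_iff_continuousAt.2 fun ζ => UniformFun.tendsto_iff_tendstoUniformly.2 ?_
  rw [Metric.tendstoUniformly_iff]
  intro ε hε
  have hsmall : Filter.Tendsto (fun ζ' => C * ‖ζ' - ζ‖) (nhds ζ) (nhds 0) := by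
    simpa using ((continuous_id.sub continuous_const).norm.tendsto' ζ 0 (by simp)).const_mul C
  filter_upwards [hsmall.eventually (gt_mem_nhds hε)] with ζ' hζ' x
  calc dist (inner 𝕜 (f x) ζ) (inner 𝕜 (f x) ζ') = ‖inner 𝕜 (f x) (ζ' - ζ)‖ := by
        rw [dist_eq_norm', inner_sub_right]
    _ ≤ ‖f x‖ * ‖ζ' - ζ‖ := norm_inner_le_norm _ _
    _ ≤ C * ‖ζ' - ζ‖ := by gcongr; exact hf x
    _ < ε := hζ'

theorem orthogonal_le_weakContinuitySubmodule {f : X → E} {K : Submodule 𝕜 E}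
    (hfK : ∀ x, f x ∈ K) : Kᗮ ≤ weakContinuitySubmodule 𝕜 f := fun ζ hζ => by
  simpa only [mem_weakContinuitySubmodule, K.inner_right_of_mem_orthogonal (hfK _) hζ]
    using continuous_const

theorem continuous_inner_of_mem_closure_span {f : X → E} {C : ℝ} (hf : ∀ x, ‖f x‖ ≤ C)
    {D : Set E} [(Submodule.span 𝕜 D).topologicalClosure.HasOrthogonalProjection]
    (hfD : ∀ x, f x ∈ (Submodule.span 𝕜 D).topologicalClosure)
    (hD : ∀ ζ ∈ D, Continuous fun x => inner 𝕜 (f x) ζ) (ζ : E) :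
    Continuous fun x => inner 𝕜 (f x) ζ := by
  set K := (Submodule.span 𝕜 D).topologicalClosure
  have hK : K ≤ weakContinuitySubmodule 𝕜 f :=
    Submodule.topologicalClosure_minimal _ (Submodule.span_le.2 hD)
      (isClosed_weakContinuitySubmodule hf)
  have htop : weakContinuitySubmodule 𝕜 f = ⊤ := by
    rw [eq_top_iff, ← K.sup_orthogonal_of_hasOrthogonalProjection]
    exact sup_le hK (orthogonal_le_weakContinuitySubmodule hfD)
  exact mem_weakContinuitySubmodule.1 (htop ▸ Submodule.mem_top)

theorem exists_weaklyContinuous_norm_le_inner_eq [CompleteSpace E] {Y : Type*} (a : Y → E)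
    (b : X → E) {C : ℝ} (hb : ∀ x, ‖b x‖ ≤ C)
    (hcont : ∀ y, Continuous fun x => inner 𝕜 (b x) (a y)) :
    ∃ b' : X → E, (∀ ζ, Continuous fun x => inner 𝕜 (b' x) ζ) ∧ (∀ x, ‖b' x‖ ≤ ‖b x‖) ∧
      ∀ x y, inner 𝕜 (b' x) (a y) = inner 𝕜 (b x) (a y) := by
  set K := (Submodule.span 𝕜 (Set.range a)).topologicalClosure
  have hnorm (x : X) : ‖K.starProjection (b x)‖ ≤ ‖b x‖ := K.norm_starProjection_apply_le _
  have hinner (x : X) (y : Y) : inner 𝕜 (K.starProjection (b x)) (a y) = inner 𝕜 (b x) (a y) := by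
    have ha : a y ∈ K := Submodule.le_topologicalClosure _ (Submodule.subset_span ⟨y, rfl⟩)
    rw [K.inner_starProjection_left_eq_right, K.starProjection_eq_self_iff.2 ha]
  refine ⟨fun x => K.starProjection (b x), ?_, hnorm, hinner⟩
  refine continuous_inner_of_mem_closure_span (fun x => (hnorm x).trans (hb x))
    (fun x => K.starProjection_apply_mem (b x)) ?_
  rintro _ ⟨y, rfl⟩
  simpa only [hinner] using hcont y

end WeakContinuity

/-- Let `G` be a topological group, `u : G → ℂ` continuous, `H` a
Hilbert space, and `ξ, η : G → H` bounded functions with `u (s t⁻¹) = ⟨ξ s, η t⟩` for all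
`s, t`.  Then there are bounded *weakly continuous* `ξ', η' : G → H`, with suprema of
norms dominated by those of `ξ` and `η`, realizing the same identity. -/
theorem weakly_continuous_factorization_of_factorization {G : Type u} [Group G]
    [TopologicalSpace G] [IsTopologicalGroup G]
    {H : Type v} [NormedAddCommGroup H] [InnerProductSpace ℂ H] [CompleteSpace H]
    (u : G → ℂ) (hu : Continuous u) (ξ η : G → H) (A B : ℝ)
    (hξ : ∀ s : G, ‖ξ s‖ ≤ A) (hη : ∀ t : G, ‖η t‖ ≤ B)
    (huv : ∀ s t : G, u (s * t⁻¹) = ⟪η t, ξ s⟫) :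
    ∃ ξ' η' : G → H,
      (∀ ζ : H, Continuous fun s : G => (⟪ξ' s, ζ⟫ : ℂ)) ∧
      (∀ ζ : H, Continuous fun t : G => (⟪η' t, ζ⟫ : ℂ)) ∧
      (∀ s : G, ‖ξ' s‖ ≤ ⨆ s' : G, ‖ξ s'‖) ∧
      (∀ t : G, ‖η' t‖ ≤ ⨆ t' : G, ‖η t'‖) ∧
      ∀ s t : G, u (s * t⁻¹) = ⟪η' t, ξ' s⟫ := by
  have hu_left (s : G) : Continuous fun t => u (s * t⁻¹) := by fun_prop
  have hu_right (t : G) : Continuous fun s => u (s * t⁻¹) := by fun_prop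
  obtain ⟨η', hη'cont, hη'norm, hη'inner⟩ := exists_weaklyContinuous_norm_le_inner_eq (𝕜 := ℂ)
    ξ η hη fun s => (hu_left s).congr (huv s)
  obtain ⟨ξ', hξ'cont, hξ'norm, hξ'inner⟩ := exists_weaklyContinuous_norm_le_inner_eq (𝕜 := ℂ)
    η' ξ hξ fun t => (hu_right t).star.congr fun s => by
      rw [huv, ← hη'inner]
      exact inner_conj_symm _ _
  have hξbdd : BddAbove (Set.range fun s => ‖ξ s‖) := ⟨A, Set.forall_mem_range.2 hξ⟩
  have hηbdd : BddAbove (Set.range fun t => ‖η t‖) := ⟨B, Set.forall_mem_range.2 hη⟩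
  refine ⟨ξ', η', hξ'cont, hη'cont, fun s => (hξ'norm s).trans (le_ciSup hξbdd s),
    fun t => (hη'norm t).trans (le_ciSup hηbdd t), fun s t => ?_⟩
  rw [huv, ← hη'inner, ← inner_conj_symm, ← hξ'inner, inner_conj_symm]
end

section
/- Let G be a group, H a Hilbert space, ξ, η : G → H bounded functions, and u : G → ℂ a function with u(st⁻¹) = ⟨ξ(s), η(t)⟩ for all s,t ∈ G. Then u satisfies Grothendieck's double limit criterion: for any two sequences (s_n) and (t_m) in G, if both iterated limits lim_n lim_m u(s_n t_m) and lim_m lim_n u(s_n t_m) exist, then they are equal. -/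
/-!
Pass to the completion of `H` and choose ultrafilters refining `atTop` on both index sequences.
Bounded sets of a Hilbert space are weakly compact (Riesz representation plus Banach–Alaoglu),
so `ξ (s n)` and `η (t m)⁻¹` have weak limits `X` and `Y` along them. Since
`u (s n * t m) = ⟪η (t m)⁻¹, ξ (s n)⟫`, the inner limits are `⟪Y, ξ (s n)⟫` and `⟪η (t m)⁻¹, X⟫`,
and both iterated limits equal `⟪Y, X⟫`.
-/

universe u v

local notation "⟪" x ", " y "⟫" => @inner ℂ _ _ x y

open Filter Topology
open scoped InnerProductSpace

section
variable {𝕜 E : Type*} [RCLike 𝕜] [NormedAddCommGroup E] [InnerProductSpace 𝕜 E]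

theorem exists_tendsto_inner_of_norm_le [CompleteSpace E] {ι : Type*} (𝒰 : Ultrafilter ι)
    {v : ι → E} {C : ℝ} (hv : ∀ i, ‖v i‖ ≤ C) :
    ∃ w : E, ∀ z : E, Tendsto (fun i => ⟪v i, z⟫_𝕜) 𝒰 (𝓝 ⟪w, z⟫_𝕜) := by
  let Φ : ι → WeakDual 𝕜 E := fun i => (InnerProductSpace.toDual 𝕜 E (v i)).toWeakDual
  have hΦ : ∀ i, Φ i ∈ WeakDual.toStrongDual ⁻¹' Metric.closedBall 0 C := fun i => by
    simpa [Φ] using hv i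
  obtain ⟨φ, -, hφ⟩ := (WeakDual.isCompact_closedBall 0 C).ultrafilter_le_nhds (𝒰.map Φ)
    (le_principal_iff.2 (mem_map.2 (univ_mem' hΦ)))
  refine ⟨(InnerProductSpace.toDual 𝕜 E).symm (WeakDual.toStrongDual φ), fun z => ?_⟩
  have hφz : Tendsto (fun i => Φ i z) 𝒰 (𝓝 (φ z)) :=
    tendsto_iff_forall_eval_tendsto_topDualPairing.mp hφ z
  simpa [Φ] using hφz

theorem Filter.Tendsto.inner_swap {ι : Type*} {l : Filter ι} {v : ι → E} {w z : E}
    (h : Tendsto (fun i => ⟪v i, z⟫_𝕜) l (𝓝 ⟪w, z⟫_𝕜)) :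
    Tendsto (fun i => ⟪z, v i⟫_𝕜) l (𝓝 ⟪z, w⟫_𝕜) := by
  simpa only [Function.comp_def, inner_conj_symm] using (RCLike.continuous_conj.tendsto _).comp h

variable {ι κ : Type*} {l₁ : Filter ι} {l₂ : Filter κ} [l₁.NeBot] [l₂.NeBot]
  {x : ι → E} {y : κ → E} {A B : ℝ} {f : ι → 𝕜} {g : κ → 𝕜} {a b : 𝕜}

theorem iterated_limits_inner_eq_of_completeSpace [CompleteSpace E]
    (hx : ∀ i, ‖x i‖ ≤ A) (hy : ∀ j, ‖y j‖ ≤ B)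
    (hf : ∀ i, Tendsto (fun j => ⟪y j, x i⟫_𝕜) l₂ (𝓝 (f i))) (hfa : Tendsto f l₁ (𝓝 a))
    (hg : ∀ j, Tendsto (fun i => ⟪y j, x i⟫_𝕜) l₁ (𝓝 (g j))) (hgb : Tendsto g l₂ (𝓝 b)) :
    a = b := by
  obtain ⟨X, hX⟩ := exists_tendsto_inner_of_norm_le (𝕜 := 𝕜) (Ultrafilter.of l₁) hx
  obtain ⟨Y, hY⟩ := exists_tendsto_inner_of_norm_le (𝕜 := 𝕜) (Ultrafilter.of l₂) hy
  have hfY : f = fun i => ⟪Y, x i⟫_𝕜 := funext fun i =>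
    tendsto_nhds_unique ((hf i).mono_left (Ultrafilter.of_le l₂)) (hY (x i))
  have hgX : g = fun j => ⟪y j, X⟫_𝕜 := funext fun j =>
    tendsto_nhds_unique ((hg j).mono_left (Ultrafilter.of_le l₁)) (hX (y j)).inner_swap
  calc a = ⟪Y, X⟫_𝕜 :=
        tendsto_nhds_unique (hfa.mono_left (Ultrafilter.of_le l₁)) (hfY ▸ (hX Y).inner_swap)
    _ = b := tendsto_nhds_unique (hY X) (hgX ▸ hgb.mono_left (Ultrafilter.of_le l₂))

open UniformSpace UniformSpace.Completion in
theorem iterated_limits_inner_eq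
    (hx : ∀ i, ‖x i‖ ≤ A) (hy : ∀ j, ‖y j‖ ≤ B)
    (hf : ∀ i, Tendsto (fun j => ⟪y j, x i⟫_𝕜) l₂ (𝓝 (f i))) (hfa : Tendsto f l₁ (𝓝 a))
    (hg : ∀ j, Tendsto (fun i => ⟪y j, x i⟫_𝕜) l₁ (𝓝 (g j))) (hgb : Tendsto g l₂ (𝓝 b)) :
    a = b :=
  iterated_limits_inner_eq_of_completeSpace (E := Completion E)
    (fun i => (norm_coe (x i)).trans_le (hx i)) (fun j => (norm_coe (y j)).trans_le (hy j))
    (by simpa only [inner_coe] using hf) hfa (by simpa only [inner_coe] using hg) hgb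

end

/-- Let `G` be a group, `H` a Hilbert space, `ξ, η : G → H` bounded,
and `u : G → ℂ` with `u (s t⁻¹) = ⟨ξ s, η t⟩`.  Then `u` satisfies Grothendieck's double
limit criterion: whenever both iterated limits of `u (s n * t m)` exist, they agree. -/
theorem double_limit_criterion {G : Type u} [Group G]
    {H : Type v} [NormedAddCommGroup H] [InnerProductSpace ℂ H]
    (ξ η : G → H) (A B : ℝ)
    (hξ : ∀ s : G, ‖ξ s‖ ≤ A) (hη : ∀ t : G, ‖η t‖ ≤ B)
    (u : G → ℂ) (hu : ∀ s t : G, u (s * t⁻¹) = ⟪η t, ξ s⟫)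
    (s t : ℕ → G) (f g : ℕ → ℂ) (a b : ℂ)
    (hf : ∀ n, Tendsto (fun m => u (s n * t m)) atTop (nhds (f n)))
    (hfa : Tendsto f atTop (nhds a))
    (hg : ∀ m, Tendsto (fun n => u (s n * t m)) atTop (nhds (g m)))
    (hgb : Tendsto g atTop (nhds b)) :
    a = b := by
  have hst : ∀ n m, u (s n * t m) = ⟪η (t m)⁻¹, ξ (s n)⟫ := fun n m => by
    simpa only [inv_inv] using hu (s n) (t m)⁻¹
  simp only [hst] at hf hg
  exact iterated_limits_inner_eq (fun n => hξ (s n)) (fun m => hη (t m)⁻¹) hf hfa hg hgb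
end
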